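/- For each k \geq 0 let \mu_{k+1}: \mathcal{I}^{\times(k+1)} \to \mathcal{I} denote the iterated concatenation functor (\mathbf{n_0},...,\mathbf{n_k}) \mapsto \mathbf{n_0} \sqcup ... \sqcup \mathbf{n_k}. For each morphism \alpha: [k] \to [l] in the simplex category, define a natural transformation \bar{\alpha}: \mu_{l+1} \Rightarrow \mu_{k+1} \circ \alpha^* by setting \bar{\alpha} = id if \alpha is a degeneracy or a face map other than the last, and \bar{\alpha} the block permutation \tau_{(\mathbf{n_0} \sqcup ... \sqcup \mathbf{n_{k-1}}, \mathbf{n_k})} if \alpha is the last face map \delta^k. Then these assignments are compatible with the simplicial identities, i.e., for composable face/degeneracy maps, the two ways of computing \bar{\cdot} on the two sides of each simplicial identity agree. -/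

import Mathlib

/-- Effect on objects of the face maps of the cyclic bar construction `B^cy_•𝓘` of the
monoidal category `(𝓘, ⊔, 𝟎)`, recorded on cardinalities:
`d_i(n_0,...,n_{k+1}) = (n_0, ..., n_i + n_{i+1}, ..., n_{k+1})` for `i < k+1` and
`d_{k+1}(n_0,...,n_{k+1}) = (n_{k+1} + n_0, n_1, ..., n_k)`. -/
def faceObj (k i : ℕ) (n : Fin (k + 2) → ℕ) : Fin (k + 1) → ℕ :=
  if i = k + 1 then
    fun j => if j.val = 0 then n (Fin.last (k + 1)) + n 0 else n j.castSucc
  else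
    fun j =>
      if j.val < i then n j.castSucc
      else if j.val = i then n j.castSucc + n j.succ
      else n j.succ

/-- Effect on objects of the degeneracy maps of `B^cy_•𝓘`:
`s_i(n_0,...,n_k) = (n_0,...,n_i, 0, n_{i+1},...,n_k)`. -/
def degenObj (k i : ℕ) (n : Fin (k + 1) → ℕ) : Fin (k + 2) → ℕ :=
  fun j =>
    if h : j.val ≤ i ∧ j.val ≤ k then n ⟨j.val, by omega⟩
    else if j.val = i + 1 then 0
    else n ⟨min (j.val - 1) k, by omega⟩

/-- The block permutation `τ_{(m,a)}` as a function (0-indexed):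
`x < m` is sent to `a + x` and `m + j` to `j`. -/
def tau (m a : ℕ) (x : ℕ) : ℕ := if x < m then a + x else x - m

/-- The total cardinality `n_0 + ⋯ + n_k` of a tuple of objects of `𝓘`. -/
def totsum {j : ℕ} (n : Fin j → ℕ) : ℕ := ∑ i, n i

/-- The component at the tuple `n` of the natural transformation
`ᾱ : μ_{l+1} ⟹ μ_{k+1} ∘ α^*` associated to a face map `α = δ_i` of the cyclic bar
construction: it is the identity for all faces except the last one, where it is the block
permutation `τ_{(n_0 ⊔ ⋯ ⊔ n_k, n_{k+1})}` of `n_0 + ⋯ + n_{k+1}` letters.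
(For degeneracy maps the corresponding component is the identity.) -/
def barFace (k i : ℕ) (n : Fin (k + 2) → ℕ) : ℕ → ℕ :=
  if i = k + 1 then tau (totsum n - n (Fin.last (k + 1))) (n (Fin.last (k + 1))) else id

/-!
On `{0, …, S - 1}`, where `S` is the total cardinality, every `ᾱ` is the identity except on the
last face, where `τ_{(S - a, a)}` is the rotation `x ↦ x + a mod S` by the last entry `a`.
Faces and degeneracies preserve `S`, so the identities reduce to bookkeeping of the last entry,
except `d_{k+1} d_{k+2} = d_{k+1} d_{k+1}`, which says that rotating by `n_{k+2}` and then by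
`n_{k+1}` is rotating by `n_{k+1} + n_{k+2}`, and `d_{k+1} s_k = id`, where the last entry is `0`.
-/

lemma tau_tau {S a b x : ℕ} (hab : a + b ≤ S) (hx : x < S) :
    tau (S - b) b (tau (S - a) a x) = tau (S - (b + a)) (b + a) x := by
  unfold tau; split_ifs <;> omega

lemma tau_zero_of_lt {m x : ℕ} (hx : x < m) : tau m 0 x = x := by
  simp [tau, hx]

lemma add_le_totsum {j : ℕ} (n : Fin j → ℕ) {p q : Fin j} (h : p ≠ q) :
    n p + n q ≤ totsum n := by
  rw [totsum, ← Finset.sum_pair h]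
  exact Finset.sum_le_sum_of_subset (Finset.subset_univ _)

section

variable {k i : ℕ}

lemma barFace_of_ne (n : Fin (k + 2) → ℕ) (h : i ≠ k + 1) : barFace k i n = id :=
  if_neg h

lemma barFace_last (n : Fin (k + 2) → ℕ) :
    barFace k (k + 1) n = tau (totsum n - n (Fin.last (k + 1))) (n (Fin.last (k + 1))) :=
  if_pos rfl

lemma faceObj_eq_succAbove_add (hi : i ≤ k) (n : Fin (k + 2) → ℕ) (j : Fin (k + 1)) :
    faceObj k i n j = n ((⟨i + 1, by omega⟩ : Fin (k + 2)).succAbove j) +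
      if j = ⟨i, by omega⟩ then n ⟨i + 1, by omega⟩ else 0 := by
  simp only [faceObj, if_neg (show i ≠ k + 1 by omega), Fin.succAbove, Fin.lt_def,
    Fin.val_castSucc, Fin.ext_iff]
  split_ifs <;> first | omega | (congr 2; ext; simp only [Fin.val_succ]; omega)

lemma totsum_faceObj (hi : i ≤ k + 1) (n : Fin (k + 2) → ℕ) :
    totsum (faceObj k i n) = totsum n := by
  rcases hi.lt_or_eq with hi | rfl
  · rw [totsum, Finset.sum_congr rfl fun j _ =>
        faceObj_eq_succAbove_add (Nat.le_of_lt_succ hi) n j, Finset.sum_add_distrib,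
      Finset.sum_ite_eq', if_pos (Finset.mem_univ _), totsum,
      Fin.sum_univ_succAbove n ⟨i + 1, by omega⟩, add_comm]
  · rw [totsum, totsum, Fin.sum_univ_succ, Fin.sum_univ_castSucc, Fin.sum_univ_succ]
    simp only [faceObj, ↓reduceIte, Fin.val_zero, Fin.val_succ, Nat.add_eq_zero_iff, one_ne_zero,
      and_false, Fin.castSucc_succ, Fin.castSucc_zero]
    ring

lemma faceObj_last_of_lt (hi : i < k) (n : Fin (k + 2) → ℕ) :
    faceObj k i n (Fin.last k) = n (Fin.last (k + 1)) := by
  simp only [faceObj, Fin.val_last, if_neg (show i ≠ k + 1 by omega),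
    if_neg (show ¬k < i by omega), if_neg (show k ≠ i by omega), Fin.succ_last]

lemma faceObj_last_self (n : Fin (k + 2) → ℕ) :
    faceObj k k n (Fin.last k) = n (Fin.last k).castSucc + n (Fin.last (k + 1)) := by
  simp [faceObj]

lemma faceObj_last_last (n : Fin (k + 3) → ℕ) :
    faceObj (k + 1) (k + 2) n (Fin.last (k + 1)) = n (Fin.last (k + 1)).castSucc := by
  simp [faceObj]

lemma degenObj_succAbove (hi : i ≤ k) (n : Fin (k + 1) → ℕ) (j : Fin (k + 1)) :
    degenObj k i n ((⟨i + 1, by omega⟩ : Fin (k + 2)).succAbove j) = n j := by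
  rcases Nat.lt_or_ge j.val (i + 1) with hj | hj
  · rw [Fin.succAbove_of_castSucc_lt _ _ (Fin.lt_def.2 (by simpa using hj)), degenObj,
      dif_pos ⟨by simp; omega, by simp; omega⟩]
    rfl
  · rw [Fin.succAbove_of_le_castSucc _ _ (Fin.le_def.2 (by simpa using hj)), degenObj,
      dif_neg (by simp; omega), if_neg (by simp; omega)]
    exact congrArg n (Fin.ext (by simp; omega))

lemma degenObj_self (hi : i ≤ k) (n : Fin (k + 1) → ℕ) :
    degenObj k i n ⟨i + 1, by omega⟩ = 0 := by
  simp [degenObj]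

lemma totsum_degenObj (hi : i ≤ k) (n : Fin (k + 1) → ℕ) :
    totsum (degenObj k i n) = totsum n := by
  rw [totsum, Fin.sum_univ_succAbove _ ⟨i + 1, by omega⟩, degenObj_self hi, zero_add]
  exact Finset.sum_congr rfl fun j _ => degenObj_succAbove hi n j

lemma degenObj_last_of_lt (hi : i < k) (n : Fin (k + 1) → ℕ) :
    degenObj k i n (Fin.last (k + 1)) = n (Fin.last k) := by
  rw [← Fin.succAbove_ne_last_last (a := ⟨i + 1, by omega⟩) (by simp [Fin.ext_iff]; omega),
    degenObj_succAbove hi.le]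

end

theorem barFace_faceObj_comm {k i j : ℕ} (hij : i < j) (hj : j ≤ k + 2)
    (n : Fin (k + 3) → ℕ) {x : ℕ} (hx : x < totsum n) :
    barFace k i (faceObj (k + 1) j n) (barFace (k + 1) j n x) =
      barFace k (j - 1) (faceObj (k + 1) i n) (barFace (k + 1) i n x) := by
  rcases hj.lt_or_eq with hj | rfl
  · simp only [barFace_of_ne _ (show j ≠ k + 2 by omega),
      barFace_of_ne _ (show i ≠ k + 2 by omega), barFace_of_ne _ (show i ≠ k + 1 by omega),
      barFace_of_ne _ (show j - 1 ≠ k + 1 by omega), id]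
  rcases (Nat.le_of_lt_succ hij).lt_or_eq with hi | rfl
  · rw [barFace_of_ne _ (show i ≠ k + 1 by omega), barFace_of_ne _ (show i ≠ k + 2 by omega),
      show k + 2 - 1 = k + 1 from rfl, barFace_last, barFace_last, faceObj_last_of_lt hi,
      totsum_faceObj (by omega)]
    rfl
  · rw [barFace_of_ne _ (show k + 1 ≠ k + 2 by omega), show k + 2 - 1 = k + 1 from rfl,
      barFace_last, barFace_last, barFace_last, faceObj_last_last, faceObj_last_self,
      totsum_faceObj le_rfl, totsum_faceObj (by omega)]
    exact tau_tau (add_le_totsum n (by simp [Fin.ext_iff])) hx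

theorem barFace_degenObj_eq_self {k i j : ℕ} (hij : i = j ∨ i = j + 1) (hj : j ≤ k)
    (n : Fin (k + 1) → ℕ) {x : ℕ} (hx : x < totsum n) :
    barFace k i (degenObj k j n) x = x := by
  by_cases hi : i = k + 1
  · obtain rfl : j = k := by omega
    subst hi
    rw [barFace_last, show Fin.last (j + 1) = ⟨j + 1, by omega⟩ from rfl, degenObj_self le_rfl,
      totsum_degenObj le_rfl, Nat.sub_zero]
    exact tau_zero_of_lt hx
  · rw [barFace_of_ne _ hi]
    rfl

theorem barFace_degenObj_of_lt {k i j : ℕ} (hji : j + 1 < i) (hi : i ≤ k + 2)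
    (n : Fin (k + 2) → ℕ) : barFace (k + 1) i (degenObj (k + 1) j n) = barFace k (i - 1) n := by
  rcases hi.lt_or_eq with hi | rfl
  · rw [barFace_of_ne _ (by omega), barFace_of_ne _ (by omega)]
  · rw [show k + 2 - 1 = k + 1 from rfl, barFace_last, barFace_last,
      degenObj_last_of_lt (by omega), totsum_degenObj (by omega)]

/-- the transformations `ᾱ` (identity on degeneracies and on all faces
except the last one, and the block permutation `τ_{(𝐧₀⊔⋯⊔𝐧_{k-1}, 𝐧_k)}` on the last
face map) are compatible with the simplicial identities: for each simplicial identity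
among face and degeneracy maps, the two composites of the transformations `ᾱ`
(formed according to the composition rule `\overline{βα} = (ᾱ β^*)(β̄)`) agree.
(All functions are compared on `{0, ..., n_0 + ⋯ + n_l - 1}`.) -/
theorem bar_transformations_compatible :
    -- compatibility with `d_i d_j = d_{j-1} d_i` for `i < j ≤ k+2`
    (∀ (k i j : ℕ), i < j → j ≤ k + 2 → ∀ (n : Fin (k + 3) → ℕ), ∀ x < totsum n,
        barFace k i (faceObj (k + 1) j n) (barFace (k + 1) j n x) =
          barFace k (j - 1) (faceObj (k + 1) i n) (barFace (k + 1) i n x)) ∧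
    -- compatibility with `d_i s_j = s_{j-1} d_i` for `i < j ≤ k+1`
    (∀ (k i j : ℕ), i < j → j ≤ k + 1 → ∀ (n : Fin (k + 2) → ℕ), ∀ x < totsum n,
        barFace (k + 1) i (degenObj (k + 1) j n) x = barFace k i n x) ∧
    -- compatibility with `d_i s_j = id` for `i ∈ {j, j+1}`, `j ≤ k`
    (∀ (k i j : ℕ), (i = j ∨ i = j + 1) → j ≤ k → ∀ (n : Fin (k + 1) → ℕ), ∀ x < totsum n,
        barFace k i (degenObj k j n) x = x) ∧
    -- compatibility with `d_i s_j = s_j d_{i-1}` for `j + 1 < i ≤ k+2`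
    (∀ (k i j : ℕ), j + 1 < i → i ≤ k + 2 → ∀ (n : Fin (k + 2) → ℕ), ∀ x < totsum n,
        barFace (k + 1) i (degenObj (k + 1) j n) x = barFace k (i - 1) n x) := by
  refine ⟨fun k i j hij hj n x hx => barFace_faceObj_comm hij hj n hx,
    fun k i j hij hj n x _ => ?_,
    fun k i j hij hj n x hx => barFace_degenObj_eq_self hij hj n hx,
    fun k i j hji hi n x _ => congrFun (barFace_degenObj_of_lt hji hi n) x⟩
  rw [barFace_of_ne _ (by omega), barFace_of_ne _ (by omega)]
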